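/- Let G be a simple digraph whose edge set is a disjoint union of complete sink-source digraphs K→_{n_i,m_i} (every edge goes from one of n_i source vertices to one of m_i sink vertices, each source having out-degree m_i and in-degree 0 within its component of the splitting, and each sink in-degree n_i and out-degree 0), such that the out-degree of each source in G equals its out-degree in its piece and the in-degree of each sink in G equals its in-degree in its piece. Then E(G) = 2R(G). -/

import Mathlib

open Matrix Finset

noncomputable section

/-- For a real matrix, `A * Aᵀ` is positive semidefinite. -/
theorem mulTranspose_posSemidef {m k : Type*} [Fintype m] [Fintype k] (A : Matrix m k ℝ) :
    (A * Aᵀ).PosSemidef := by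
  have h := Matrix.posSemidef_self_mul_conjTranspose A
  rwa [Matrix.conjTranspose_eq_transpose_of_trivial] at h

/-- For a real matrix, `Aᵀ * A` is positive semidefinite. -/
theorem transposeMul_posSemidef {m k : Type*} [Fintype m] [Fintype k] (A : Matrix m k ℝ) :
    (Aᵀ * A).PosSemidef := by
  simpa using mulTranspose_posSemidef Aᵀ

/-- The psd square root, as `Matrix.PosSemidef.sqrt` was defined in the older Mathlib. -/
def Matrix.PosSemidef.sqrt {n : Type*} [Fintype n] [DecidableEq n] {A : Matrix n n ℝ}
    (hA : A.PosSemidef) : Matrix n n ℝ :=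
  (hA.1.eigenvectorUnitary : Matrix n n ℝ) * diagonal ((↑) ∘ (√·) ∘ hA.1.eigenvalues) *
    (star hA.1.eigenvectorUnitary : Matrix n n ℝ)

/-- `|A|⁺ = (A Aᵀ)^{1/2}` (psd square root). -/
def absPlus {V : Type*} [Fintype V] [DecidableEq V] (A : Matrix V V ℝ) : Matrix V V ℝ :=
  (mulTranspose_posSemidef A).sqrt

/-- `|A|⁻ = (Aᵀ A)^{1/2}` (psd square root). -/
def absMinus {V : Type*} [Fintype V] [DecidableEq V] (A : Matrix V V ℝ) : Matrix V V ℝ :=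
  (transposeMul_posSemidef A).sqrt

/-- The (Nikiforov) energy: `Tr((A Aᵀ)^{1/2})`, the sum of the singular values of `A`. -/
def energy {V : Type*} [Fintype V] [DecidableEq V] (A : Matrix V V ℝ) : ℝ := (absPlus A).trace

/-- 0-1 adjacency matrix of the digraph with edge relation `E`. -/
def adjMat {V : Type*} [Fintype V] [DecidableEq V] (E : V → V → Prop) [DecidableRel E] :
    Matrix V V ℝ := Matrix.of fun i j => if E i j then 1 else 0

/-- Out-degree `d⁺(v)`. -/
def outDeg {V : Type*} [Fintype V] (E : V → V → Prop) [DecidableRel E] (v : V) : ℕ :=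
  (univ.filter (fun w => E v w)).card

/-- In-degree `d⁻(w)`. -/
def inDeg {V : Type*} [Fintype V] (E : V → V → Prop) [DecidableRel E] (w : V) : ℕ :=
  (univ.filter (fun v => E v w)).card

/-- Directed Randic index `R(G) = (1/2) Σ_{(v,w)∈E} 1/√(d⁺(v) d⁻(w))`. -/
def randic {V : Type*} [Fintype V] (E : V → V → Prop) [DecidableRel E] : ℝ :=
  (1/2) * ∑ v, ∑ w, if E v w then 1 / Real.sqrt (outDeg E v * inDeg E w) else 0

/-- Number of arcs of the digraph. -/
def numArcs {V : Type*} [Fintype V] (E : V → V → Prop) [DecidableRel E] : ℕ :=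
  (univ.filter (fun p : V × V => E p.1 p.2)).card

/-- Maximum over vertices of in- and out-degrees, `Δ(G)`. -/
def maxDeg {V : Type*} [Fintype V] (E : V → V → Prop) [DecidableRel E] : ℕ :=
  univ.sup (fun v => max (outDeg E v) (inDeg E v))

private lemma sqrt_aux (a b : ℝ) (ha : 0 < a) (hb : 0 < b) :
    a * b * (1 / (Real.sqrt a * Real.sqrt b)) = Real.sqrt a * Real.sqrt b := by
  have h : Real.sqrt a * Real.sqrt b * (Real.sqrt a * Real.sqrt b) = a * b := by
    rw [mul_mul_mul_comm, Real.mul_self_sqrt ha.le, Real.mul_self_sqrt hb.le]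
  have hpos : 0 < Real.sqrt a * Real.sqrt b := by positivity
  rw [← h, mul_one_div, mul_div_assoc, div_self hpos.ne', mul_one]

open scoped MatrixOrder in
theorem psd_sqrt_eq_of_sq_eq {n : Type*} [Fintype n] [DecidableEq n] {M A : Matrix n n ℝ}
    (hM : M.PosSemidef) (hA : A.PosSemidef) (h : M ^ 2 = A) : hA.sqrt = M := by
  have hM0 : 0 ≤ M := Matrix.nonneg_iff_posSemidef.2 hM
  have hA0 : 0 ≤ A := Matrix.nonneg_iff_posSemidef.2 hA
  have h1 : CFC.sqrt A = M := CFC.sqrt_unique (by rw [← h, pow_two]) hM0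
  rw [← h1, CFC.sqrt_eq_real_sqrt A hA0, cfcₙ_eq_cfc, Matrix.IsHermitian.cfc_eq hA.1]
  simp [Matrix.PosSemidef.sqrt, Matrix.IsHermitian.cfc, Function.comp_def]

/-- If a simple digraph admits a splitting into complete sink-source digraphs
`K→_{n_c, m_c}` (pieces with edge sets `S c × T c`, pairwise edge-disjoint, covering the edge
set of `G`, and such that degrees in `G` of the sources and sinks of each piece agree with
those within the piece), then `E(G) = 2 R(G)`. -/
theorem stmt_17 {n : ℕ} (E : Fin n → Fin n → Prop) [DecidableRel E]
    (hloop : ∀ v, ¬ E v v)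
    (k : ℕ) (S T : Fin k → Finset (Fin n))
    (hcover : ∀ i j, E i j ↔ ∃ c, i ∈ S c ∧ j ∈ T c)
    (hdisj : ∀ c c', c ≠ c' → ∀ i j, ¬ (i ∈ S c ∧ j ∈ T c ∧ i ∈ S c' ∧ j ∈ T c'))
    (hsource : ∀ c, ∀ v ∈ S c, (T c).Nonempty → outDeg E v = (T c).card)
    (hsink : ∀ c, ∀ w ∈ T c, (S c).Nonempty → inDeg E w = (S c).card) :
    energy (adjMat E) = 2 * randic E := by
  classical
  set P : Finset (Fin k) := univ.filter (fun c => (S c).Nonempty ∧ (T c).Nonempty) with hPdef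
  have hPmem : ∀ c : Fin k, c ∈ P ↔ (S c).Nonempty ∧ (T c).Nonempty := by
    intro c; simp [hPdef]
  -- indicator decomposition of the edge relation
  have hind : ∀ i j : Fin n, (if E i j then (1:ℝ) else 0)
      = ∑ c ∈ P, (if i ∈ S c then (1:ℝ) else 0) * (if j ∈ T c then (1:ℝ) else 0) := by
    intro i j
    by_cases h : E i j
    · obtain ⟨c, hi, hj⟩ := (hcover i j).1 h
      have hcP : c ∈ P := (hPmem c).2 ⟨⟨i, hi⟩, ⟨j, hj⟩⟩
      rw [if_pos h, eq_comm, Finset.sum_eq_single c]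
      · simp [hi, hj]
      · intro c' hc' hne
        by_cases hi' : i ∈ S c'
        · by_cases hj' : j ∈ T c'
          · exact absurd ⟨hi', hj', hi, hj⟩ (hdisj c' c hne i j)
          · simp [hj']
        · simp [hi']
      · intro hc; exact absurd hcP hc
    · rw [if_neg h, eq_comm, Finset.sum_eq_zero]
      intro c hc
      by_cases hi : i ∈ S c
      · by_cases hj : j ∈ T c
        · exact absurd ((hcover i j).2 ⟨c, hi, hj⟩) h
        · simp [hj]
      · simp [hi]
  -- neighbourhoods
  have hNout : ∀ c ∈ P, ∀ i ∈ S c, univ.filter (fun w => E i w) = T c := by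
    intro c hc i hi
    obtain ⟨hS, hT⟩ := (hPmem c).1 hc
    refine (Finset.eq_of_subset_of_card_le (fun j hj => ?_) ?_).symm
    · simp only [Finset.mem_filter, Finset.mem_univ, true_and]
      exact (hcover i j).2 ⟨c, hi, hj⟩
    · exact le_of_eq (hsource c i hi hT)
  have hNin : ∀ c ∈ P, ∀ j ∈ T c, univ.filter (fun v => E v j) = S c := by
    intro c hc j hj
    obtain ⟨hS, hT⟩ := (hPmem c).1 hc
    refine (Finset.eq_of_subset_of_card_le (fun i hi => ?_) ?_).symm
    · simp only [Finset.mem_filter, Finset.mem_univ, true_and]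
      exact (hcover i j).2 ⟨c, hi, hj⟩
    · exact le_of_eq (hsink c j hj hS)
  have hout : ∀ c ∈ P, ∀ i ∈ S c, outDeg E i = (T c).card := by
    intro c hc i hi
    exact hsource c i hi ((hPmem c).1 hc).2
  have hin : ∀ c ∈ P, ∀ j ∈ T c, inDeg E j = (S c).card := by
    intro c hc j hj
    exact hsink c j hj ((hPmem c).1 hc).1
  -- disjointness of the pieces
  have hTdisj : ∀ c ∈ P, ∀ c' ∈ P, c ≠ c' → ∀ w, ¬ (w ∈ T c ∧ w ∈ T c') := by
    rintro c hc c' hc' hne w ⟨hw, hw'⟩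
    have hSS : S c = S c' := (hNin c hc w hw).symm.trans (hNin c' hc' w hw')
    obtain ⟨i, hi⟩ := ((hPmem c).1 hc).1
    exact hdisj c c' hne i w ⟨hi, hw, hSS ▸ hi, hw'⟩
  have hSdisj : ∀ c ∈ P, ∀ c' ∈ P, c ≠ c' → ∀ v, ¬ (v ∈ S c ∧ v ∈ S c') := by
    rintro c hc c' hc' hne v ⟨hv, hv'⟩
    have hTT : T c = T c' := (hNout c hc v hv).symm.trans (hNout c' hc' v hv')
    obtain ⟨j, hj⟩ := ((hPmem c).1 hc).2
    exact hdisj c c' hne v j ⟨hv, hj, hv', hTT ▸ hj⟩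
  -- counting sums
  have hScount : ∀ c ∈ P, ∀ c' ∈ P,
      (∑ w, (if w ∈ S c then (1:ℝ) else 0) * (if w ∈ S c' then (1:ℝ) else 0))
        = if c = c' then ((S c).card : ℝ) else 0 := by
    intro c hc c' hc'
    by_cases h : c = c'
    · subst h
      rw [if_pos rfl]
      have he : ∀ w : Fin n, (if w ∈ S c then (1:ℝ) else 0) * (if w ∈ S c then (1:ℝ) else 0)
          = if w ∈ S c then (1:ℝ) else 0 := by intro w; split <;> simp
      simp_rw [he]
      rw [Finset.sum_ite_mem, Finset.univ_inter, Finset.sum_const, nsmul_eq_mul, mul_one]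
    · rw [if_neg h]
      apply Finset.sum_eq_zero
      intro w _
      by_cases hw : w ∈ S c
      · have hw' : w ∉ S c' := fun hw' => hSdisj c hc c' hc' h w ⟨hw, hw'⟩
        simp [hw']
      · simp [hw]
  have hTcount : ∀ c ∈ P, ∀ c' ∈ P,
      (∑ w, (if w ∈ T c then (1:ℝ) else 0) * (if w ∈ T c' then (1:ℝ) else 0))
        = if c = c' then ((T c).card : ℝ) else 0 := by
    intro c hc c' hc'
    by_cases h : c = c'
    · subst h
      rw [if_pos rfl]
      have he : ∀ w : Fin n, (if w ∈ T c then (1:ℝ) else 0) * (if w ∈ T c then (1:ℝ) else 0)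
          = if w ∈ T c then (1:ℝ) else 0 := by intro w; split <;> simp
      simp_rw [he]
      rw [Finset.sum_ite_mem, Finset.univ_inter, Finset.sum_const, nsmul_eq_mul, mul_one]
    · rw [if_neg h]
      apply Finset.sum_eq_zero
      intro w _
      by_cases hw : w ∈ T c
      · have hw' : w ∉ T c' := fun hw' => hTdisj c hc c' hc' h w ⟨hw, hw'⟩
        simp [hw']
      · simp [hw]
  -- the candidate square root
  set α : Fin k → ℝ := fun c => Real.sqrt ((T c).card) / Real.sqrt ((S c).card) with hαdef
  have hαnn : ∀ c, 0 ≤ α c := fun c => div_nonneg (Real.sqrt_nonneg _) (Real.sqrt_nonneg _)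
  set B : Matrix (Fin k) (Fin n) ℝ :=
    Matrix.of (fun c i => if c ∈ P ∧ i ∈ S c then Real.sqrt (α c) else 0) with hBdef
  set M : Matrix (Fin n) (Fin n) ℝ := Bᴴ * B with hMdef
  have hMpsd : M.PosSemidef := Matrix.posSemidef_conjTranspose_mul_self B
  have hMentry : ∀ i j, M i j
      = ∑ c ∈ P, α c * ((if i ∈ S c then (1:ℝ) else 0) * (if j ∈ S c then (1:ℝ) else 0)) := by
    intro i j
    calc M i j = ∑ c : Fin k, (if c ∈ P ∧ i ∈ S c then Real.sqrt (α c) else 0) *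
        (if c ∈ P ∧ j ∈ S c then Real.sqrt (α c) else 0) := by
          simp [hMdef, hBdef, Matrix.mul_apply, Matrix.conjTranspose_apply]
      _ = ∑ c ∈ P, (if c ∈ P ∧ i ∈ S c then Real.sqrt (α c) else 0) *
        (if c ∈ P ∧ j ∈ S c then Real.sqrt (α c) else 0) :=
          (Finset.sum_subset (Finset.subset_univ P) (fun c _ hc => by simp [hc])).symm
      _ = ∑ c ∈ P, α c * ((if i ∈ S c then (1:ℝ) else 0) * (if j ∈ S c then (1:ℝ) else 0)) := by
          refine Finset.sum_congr rfl fun c hc => ?_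
          by_cases hi : i ∈ S c <;> by_cases hj : j ∈ S c <;>
            simp [hc, hi, hj, Real.mul_self_sqrt (hαnn c)]
  have hαsq : ∀ c ∈ P, α c * α c * ((S c).card : ℝ) = ((T c).card : ℝ) := by
    intro c hc
    obtain ⟨hS, hT⟩ := (hPmem c).1 hc
    have hSpos : (0:ℝ) < (S c).card := by exact_mod_cast Finset.card_pos.2 hS
    have h1 : Real.sqrt ((S c).card : ℝ) * Real.sqrt ((S c).card : ℝ) = ((S c).card : ℝ) :=
      Real.mul_self_sqrt hSpos.le
    have h2 : Real.sqrt ((T c).card : ℝ) * Real.sqrt ((T c).card : ℝ) = ((T c).card : ℝ) :=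
      Real.mul_self_sqrt (Nat.cast_nonneg _)
    have hstep : α c * α c = ((T c).card : ℝ) / ((S c).card : ℝ) := by
      rw [hαdef]
      rw [div_mul_div_comm, h1, h2]
    rw [hstep, div_mul_cancel₀ _ hSpos.ne']
  -- the generic triple-sum manipulation
  have hgen : ∀ (F G : Fin k → Fin n → ℝ),
      (∑ w, (∑ c ∈ P, F c w) * (∑ c ∈ P, G c w))
        = ∑ c ∈ P, ∑ c' ∈ P, ∑ w, F c w * G c' w := by
    intro F G
    simp_rw [Finset.sum_mul_sum]
    rw [Finset.sum_comm]
    exact Finset.sum_congr rfl fun c _ => Finset.sum_comm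
  -- M ^ 2 = A Aᵀ
  have hMsq : M ^ 2 = adjMat E * (adjMat E)ᵀ := by
    have hlhs : ∀ i v : Fin n, (M ^ 2) i v
        = ∑ c ∈ P, ((T c).card : ℝ) *
            ((if i ∈ S c then (1:ℝ) else 0) * (if v ∈ S c then (1:ℝ) else 0)) := by
      intro i v
      rw [pow_two, Matrix.mul_apply]
      simp_rw [hMentry]
      rw [hgen (fun c w => α c * ((if i ∈ S c then (1:ℝ) else 0) * (if w ∈ S c then (1:ℝ) else 0)))
        (fun c w => α c * ((if w ∈ S c then (1:ℝ) else 0) * (if v ∈ S c then (1:ℝ) else 0)))]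
      refine Finset.sum_congr rfl fun c hc => ?_
      have hone : ∀ c' ∈ P, (∑ w, (α c * ((if i ∈ S c then (1:ℝ) else 0) * (if w ∈ S c then (1:ℝ) else 0))) *
          (α c' * ((if w ∈ S c' then (1:ℝ) else 0) * (if v ∈ S c' then (1:ℝ) else 0))))
          = if c = c' then (α c * α c * ((S c).card : ℝ)) *
              ((if i ∈ S c then (1:ℝ) else 0) * (if v ∈ S c then (1:ℝ) else 0)) else 0 := by
        intro c' hc'
        have : ∀ w, (α c * ((if i ∈ S c then (1:ℝ) else 0) * (if w ∈ S c then (1:ℝ) else 0))) *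
            (α c' * ((if w ∈ S c' then (1:ℝ) else 0) * (if v ∈ S c' then (1:ℝ) else 0)))
            = (α c * α c' * ((if i ∈ S c then (1:ℝ) else 0) * (if v ∈ S c' then (1:ℝ) else 0))) *
              ((if w ∈ S c then (1:ℝ) else 0) * (if w ∈ S c' then (1:ℝ) else 0)) := fun w => by ring
        simp_rw [this]
        rw [← Finset.mul_sum, hScount c hc c' hc']
        by_cases h : c = c'
        · subst h; simp only [eq_self_iff_true, if_true]; ring
        · simp [h]
      rw [Finset.sum_congr rfl hone, Finset.sum_ite_eq P c, if_pos hc, hαsq c hc]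
    have hrhs : ∀ i v : Fin n, (adjMat E * (adjMat E)ᵀ) i v
        = ∑ c ∈ P, ((T c).card : ℝ) *
            ((if i ∈ S c then (1:ℝ) else 0) * (if v ∈ S c then (1:ℝ) else 0)) := by
      intro i v
      rw [Matrix.mul_apply]
      have : ∀ w, adjMat E i w * (adjMat E)ᵀ w v
          = (∑ c ∈ P, (if i ∈ S c then (1:ℝ) else 0) * (if w ∈ T c then (1:ℝ) else 0)) *
            (∑ c ∈ P, (if v ∈ S c then (1:ℝ) else 0) * (if w ∈ T c then (1:ℝ) else 0)) := by
        intro w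
        rw [Matrix.transpose_apply]
        show (if E i w then (1:ℝ) else 0) * (if E v w then (1:ℝ) else 0) = _
        rw [hind i w, hind v w]
      simp_rw [this]
      rw [hgen (fun c w => (if i ∈ S c then (1:ℝ) else 0) * (if w ∈ T c then (1:ℝ) else 0))
        (fun c w => (if v ∈ S c then (1:ℝ) else 0) * (if w ∈ T c then (1:ℝ) else 0))]
      refine Finset.sum_congr rfl fun c hc => ?_
      have hone : ∀ c' ∈ P, (∑ w, ((if i ∈ S c then (1:ℝ) else 0) * (if w ∈ T c then (1:ℝ) else 0)) *
          ((if v ∈ S c' then (1:ℝ) else 0) * (if w ∈ T c' then (1:ℝ) else 0)))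
          = if c = c' then ((T c).card : ℝ) *
              ((if i ∈ S c then (1:ℝ) else 0) * (if v ∈ S c then (1:ℝ) else 0)) else 0 := by
        intro c' hc'
        have : ∀ w, ((if i ∈ S c then (1:ℝ) else 0) * (if w ∈ T c then (1:ℝ) else 0)) *
            ((if v ∈ S c' then (1:ℝ) else 0) * (if w ∈ T c' then (1:ℝ) else 0))
            = ((if i ∈ S c then (1:ℝ) else 0) * (if v ∈ S c' then (1:ℝ) else 0)) *
              ((if w ∈ T c then (1:ℝ) else 0) * (if w ∈ T c' then (1:ℝ) else 0)) := fun w => by ring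
        simp_rw [this]
        rw [← Finset.mul_sum, hTcount c hc c' hc']
        by_cases h : c = c'
        · subst h; simp only [eq_self_iff_true, if_true]; ring
        · simp [h]
      rw [Finset.sum_congr rfl hone, Finset.sum_ite_eq P c, if_pos hc]
    ext i v
    rw [hlhs i v, hrhs i v]
  have habs : absPlus (adjMat E) = M :=
    psd_sqrt_eq_of_sq_eq hMpsd (mulTranspose_posSemidef (adjMat E)) hMsq
  -- trace of M
  have hαn : ∀ c ∈ P, α c * ((S c).card : ℝ)
      = Real.sqrt ((T c).card) * Real.sqrt ((S c).card) := by
    intro c hc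
    obtain ⟨hS, hT⟩ := (hPmem c).1 hc
    have hSpos : (0:ℝ) < (S c).card := by exact_mod_cast Finset.card_pos.2 hS
    have hsp : (0:ℝ) < Real.sqrt ((S c).card) := Real.sqrt_pos.2 hSpos
    rw [hαdef]
    rw [div_mul_eq_mul_div, div_eq_iff hsp.ne', mul_assoc, Real.mul_self_sqrt hSpos.le]
  have htrace : M.trace = ∑ c ∈ P, Real.sqrt ((T c).card) * Real.sqrt ((S c).card) := by
    rw [Matrix.trace]
    simp_rw [Matrix.diag_apply, hMentry]
    rw [Finset.sum_comm]
    refine Finset.sum_congr rfl fun c hc => ?_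
    have he : ∀ i : Fin n, α c * ((if i ∈ S c then (1:ℝ) else 0) * (if i ∈ S c then (1:ℝ) else 0))
        = α c * (if i ∈ S c then (1:ℝ) else 0) := by intro i; split <;> simp
    simp_rw [he]
    rw [← Finset.mul_sum, Finset.sum_ite_mem, Finset.univ_inter, Finset.sum_const,
      nsmul_eq_mul, mul_one, hαn c hc]
  -- Randic side
  have hrand : 2 * randic E = ∑ c ∈ P, Real.sqrt ((T c).card) * Real.sqrt ((S c).card) := by
    rw [randic, ← mul_assoc, show (2:ℝ) * (1/2) = 1 by norm_num, one_mul]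
    have h1 : ∀ i w : Fin n,
        (if E i w then 1 / Real.sqrt ((outDeg E i : ℝ) * (inDeg E w : ℝ)) else 0)
        = ∑ c ∈ P, ((if i ∈ S c then (1:ℝ) else 0) * (if w ∈ T c then (1:ℝ) else 0)) *
            (1 / Real.sqrt ((outDeg E i : ℝ) * (inDeg E w : ℝ))) := by
      intro i w
      rw [← Finset.sum_mul, ← hind]
      split <;> simp
    simp_rw [h1]
    have hsw : ∀ i : Fin n, (∑ w : Fin n, ∑ c ∈ P,
        ((if i ∈ S c then (1:ℝ) else 0) * (if w ∈ T c then (1:ℝ) else 0)) *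
          (1 / Real.sqrt ((outDeg E i : ℝ) * (inDeg E w : ℝ))))
        = ∑ c ∈ P, ∑ w : Fin n,
        ((if i ∈ S c then (1:ℝ) else 0) * (if w ∈ T c then (1:ℝ) else 0)) *
          (1 / Real.sqrt ((outDeg E i : ℝ) * (inDeg E w : ℝ))) := fun i => Finset.sum_comm
    simp_rw [hsw]
    rw [Finset.sum_comm]
    refine Finset.sum_congr rfl fun c hc => ?_
    obtain ⟨hS, hT⟩ := (hPmem c).1 hc
    have hSpos : (0:ℝ) < (S c).card := by exact_mod_cast Finset.card_pos.2 hS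
    have hTpos : (0:ℝ) < (T c).card := by exact_mod_cast Finset.card_pos.2 hT
    have hterm : ∀ i w : Fin n,
        ((if i ∈ S c then (1:ℝ) else 0) * (if w ∈ T c then (1:ℝ) else 0)) *
          (1 / Real.sqrt ((outDeg E i : ℝ) * (inDeg E w : ℝ)))
        = (if i ∈ S c then (1:ℝ) else 0) * ((if w ∈ T c then (1:ℝ) else 0) *
          (1 / (Real.sqrt ((T c).card) * Real.sqrt ((S c).card)))) := by
      intro i w
      by_cases hi : i ∈ S c
      · by_cases hw : w ∈ T c
        · rw [hout c hc i hi, hin c hc w hw, Real.sqrt_mul (Nat.cast_nonneg _), mul_assoc]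
        · simp [hw]
      · simp [hi]
    simp_rw [hterm]
    rw [← Finset.sum_mul_sum]
    have ha : (∑ i : Fin n, (if i ∈ S c then (1:ℝ) else 0)) = ((S c).card : ℝ) := by
      rw [Finset.sum_ite_mem, Finset.univ_inter, Finset.sum_const, nsmul_eq_mul, mul_one]
    have hb : (∑ w : Fin n, (if w ∈ T c then (1:ℝ) else 0)) = ((T c).card : ℝ) := by
      rw [Finset.sum_ite_mem, Finset.univ_inter, Finset.sum_const, nsmul_eq_mul, mul_one]
    rw [ha, ← Finset.sum_mul, hb, ← mul_assoc,
      show ((S c).card : ℝ) * ((T c).card : ℝ) = ((T c).card : ℝ) * ((S c).card : ℝ) from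
        mul_comm _ _]
    exact sqrt_aux _ _ hTpos hSpos
  show (absPlus (adjMat E)).trace = 2 * randic E
  rw [habs, htrace, hrand]
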